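/- Let z > 0 and let f_z be the Stein equation solution f_z(x) = √(2π) e^{x²/2} Φ(x) (1 - Φ(z)) for x ≤ z. Then for every x with |x| ≤ z/2 the derivative satisfies |f_z'(x)| ≤ 2 e^{-z²/4}. -/

import Mathlib

/-!
Write `f_z'(x) = (1 - Φ(z)) (1 + √(2π) x e^{x²/2} Φ(x))`. For `|x| ≤ z/2` the second factor
is at most `1 + √(2π) (z/2) e^{z²/8}` in absolute value, using only `0 ≤ Φ ≤ 1`. The Gaussian
tail `1 - Φ(z)` is bounded in two ways: Mills' ratio `1 - Φ(z) ≤ e^{-z²/2} / (√(2π) z)` turns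
the growing term into `e^{-3z²/8} / 2`, and `e^{-u²/2} ≤ e^{-z²/4} e^{-u²/4}` for `u ≥ z` gives
`1 - Φ(z) ≤ √2 e^{-z²/4}`. Finally `√2 + 1/2 ≤ 2`.
-/

open MeasureTheory Real

noncomputable def stdPhi (x : ℝ) : ℝ :=
  (Real.sqrt (2 * Real.pi))⁻¹ * ∫ u in Set.Iic x, Real.exp (-u ^ 2 / 2)

open Set Filter Topology

section GaussianTail

variable {b : ℝ}

lemma integral_Ioi_mul_exp_neg_mul_sq (hb : 0 < b) (z : ℝ) :
    ∫ u in Ioi z, u * exp (-b * u ^ 2) = exp (-b * z ^ 2) / (2 * b) := by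
  have hderiv : ∀ u ∈ Ici z,
      HasDerivAt (fun v => -exp (-b * v ^ 2) / (2 * b)) (u * exp (-b * u ^ 2)) u := by
    intro u _
    refine (((hasDerivAt_pow 2 u).const_mul (-b)).exp.neg.div_const (2 * b)).congr_deriv ?_
    field_simp
    ring
  have hlim : Tendsto (fun v : ℝ => -exp (-b * v ^ 2) / (2 * b)) atTop (𝓝 0) := by
    simpa using (tendsto_exp_atBot.comp ((tendsto_pow_atTop two_ne_zero).const_mul_atTop_of_neg
      (neg_lt_zero.2 hb))).neg.div_const (2 * b)
  rw [integral_Ioi_of_hasDerivAt_of_tendsto' hderiv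
    (integrable_mul_exp_neg_mul_sq hb).integrableOn hlim]
  ring

lemma integral_Ioi_exp_neg_mul_sq_le_div (hb : 0 < b) {z : ℝ} (hz : 0 < z) :
    ∫ u in Ioi z, exp (-b * u ^ 2) ≤ exp (-b * z ^ 2) / (2 * b * z) := by
  rw [div_mul_eq_div_div, le_div_iff₀ hz, mul_comm, ← integral_Ioi_mul_exp_neg_mul_sq hb,
    ← integral_const_mul]
  refine setIntegral_mono_on ((integrable_exp_neg_mul_sq hb).const_mul z).integrableOn
    (integrable_mul_exp_neg_mul_sq hb).integrableOn measurableSet_Ioi fun u hu => ?_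
  exact mul_le_mul_of_nonneg_right hu.le (exp_pos _).le

lemma integral_Ioi_exp_neg_mul_sq_le (hb : 0 < b) {z : ℝ} (hz : 0 ≤ z) :
    ∫ u in Ioi z, exp (-b * u ^ 2) ≤ exp (-(b / 2) * z ^ 2) * √(π / (b / 2)) := by
  have hhalf := integrable_exp_neg_mul_sq (half_pos hb)
  calc ∫ u in Ioi z, exp (-b * u ^ 2)
      ≤ ∫ u in Ioi z, exp (-(b / 2) * z ^ 2) * exp (-(b / 2) * u ^ 2) := by
        refine setIntegral_mono_on (integrable_exp_neg_mul_sq hb).integrableOn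
          (hhalf.const_mul _).integrableOn measurableSet_Ioi fun u hu => ?_
        have : z ^ 2 ≤ u ^ 2 := pow_le_pow_left₀ hz (le_of_lt hu) 2
        rw [← exp_add]
        exact exp_le_exp.2 (by nlinarith)
    _ = exp (-(b / 2) * z ^ 2) * ∫ u in Ioi z, exp (-(b / 2) * u ^ 2) := integral_const_mul _ _
    _ ≤ exp (-(b / 2) * z ^ 2) * ∫ u, exp (-(b / 2) * u ^ 2) :=
        mul_le_mul_of_nonneg_left
          (setIntegral_le_integral hhalf (.of_forall fun u => (exp_pos _).le)) (exp_pos _).le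
    _ = exp (-(b / 2) * z ^ 2) * √(π / (b / 2)) := by rw [integral_gaussian]

end GaussianTail

lemma hasDerivAt_integral_Iic {E : Type*} [NormedAddCommGroup E] [NormedSpace ℝ E]
    [CompleteSpace E] {f : ℝ → E} {x : ℝ} (hf : Integrable f) (hfx : ContinuousAt f x) :
    HasDerivAt (fun y => ∫ u in Iic y, f u) (f x) x := by
  have hsplit :
      (fun y => ∫ u in Iic y, f u) = fun y => (∫ u in Iic 0, f u) + ∫ u in 0..y, f u := by
    funext y
    rw [← intervalIntegral.integral_Iic_sub_Iic hf.integrableOn hf.integrableOn]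
    abel
  rw [hsplit]
  exact (intervalIntegral.integral_hasDerivAt_right hf.intervalIntegrable
    hf.aestronglyMeasurable.stronglyMeasurableAtFilter hfx).const_add _

lemma exp_neg_sq_div_two (u : ℝ) : exp (-u ^ 2 / 2) = exp (-(1 / 2) * u ^ 2) := by
  ring_nf

lemma integrable_exp_neg_sq_div_two : Integrable fun u : ℝ => exp (-u ^ 2 / 2) := by
  simpa only [exp_neg_sq_div_two] using integrable_exp_neg_mul_sq one_half_pos

lemma integral_exp_neg_sq_div_two : ∫ u, exp (-u ^ 2 / 2) = √(2 * π) := by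
  simp_rw [exp_neg_sq_div_two, integral_gaussian]
  ring_nf

lemma stdPhi_nonneg (x : ℝ) : 0 ≤ stdPhi x := by
  unfold stdPhi
  positivity

lemma stdPhi_le_one (x : ℝ) : stdPhi x ≤ 1 := by
  rw [stdPhi, inv_mul_le_one₀ (by positivity), ← integral_exp_neg_sq_div_two]
  exact setIntegral_le_integral integrable_exp_neg_sq_div_two (.of_forall fun u => (exp_pos _).le)

lemma one_sub_stdPhi (z : ℝ) :
    1 - stdPhi z = (√(2 * π))⁻¹ * ∫ u in Ioi z, exp (-u ^ 2 / 2) := by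
  have h := intervalIntegral.integral_Iic_add_Ioi (b := z)
    integrable_exp_neg_sq_div_two.integrableOn integrable_exp_neg_sq_div_two.integrableOn
  rw [integral_exp_neg_sq_div_two] at h
  have hc : (√(2 * π))⁻¹ * √(2 * π) = 1 := inv_mul_cancel₀ (by positivity)
  rw [stdPhi]
  linear_combination -hc - (√(2 * π))⁻¹ * h

lemma hasDerivAt_stdPhi (x : ℝ) :
    HasDerivAt stdPhi ((√(2 * π))⁻¹ * exp (-x ^ 2 / 2)) x :=
  (hasDerivAt_integral_Iic integrable_exp_neg_sq_div_two (by fun_prop)).const_mul _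

lemma one_sub_stdPhi_le_exp_div {z : ℝ} (hz : 0 < z) :
    1 - stdPhi z ≤ exp (-z ^ 2 / 2) / (√(2 * π) * z) := by
  have htail := integral_Ioi_exp_neg_mul_sq_le_div one_half_pos hz
  rw [one_sub_stdPhi]
  simp only [exp_neg_sq_div_two]
  calc (√(2 * π))⁻¹ * ∫ u in Ioi z, exp (-(1 / 2) * u ^ 2)
      ≤ (√(2 * π))⁻¹ * (exp (-(1 / 2) * z ^ 2) / (2 * (1 / 2) * z)) := by gcongr
    _ = exp (-(1 / 2) * z ^ 2) / (√(2 * π) * z) := by field_simp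

lemma one_sub_stdPhi_le_sqrt_two_mul_exp {z : ℝ} (hz : 0 ≤ z) :
    1 - stdPhi z ≤ √2 * exp (-z ^ 2 / 4) := by
  have htail := integral_Ioi_exp_neg_mul_sq_le one_half_pos hz
  rw [show π / (1 / 2 / 2) = 2 * (2 * π) by ring, sqrt_mul zero_le_two] at htail
  rw [one_sub_stdPhi]
  simp only [exp_neg_sq_div_two]
  calc (√(2 * π))⁻¹ * ∫ u in Ioi z, exp (-(1 / 2) * u ^ 2)
      ≤ (√(2 * π))⁻¹ * (exp (-(1 / 2 / 2) * z ^ 2) * (√2 * √(2 * π))) := by gcongr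
    _ = √2 * exp (-z ^ 2 / 4) := by
        field_simp
        ring_nf

lemma hasDerivAt_steinSolution (z x : ℝ) :
    HasDerivAt (fun y => √(2 * π) * exp (y ^ 2 / 2) * stdPhi y * (1 - stdPhi z))
      ((1 - stdPhi z) * (1 + √(2 * π) * (x * exp (x ^ 2 / 2) * stdPhi x))) x := by
  have hexp : HasDerivAt (fun y => exp (y ^ 2 / 2)) (exp (x ^ 2 / 2) * x) x := by
    simpa using ((hasDerivAt_pow 2 x).div_const 2).exp
  refine (((hexp.const_mul (√(2 * π))).mul (hasDerivAt_stdPhi x)).mul_const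
    (1 - stdPhi z)).congr_deriv ?_
  have he : exp (x ^ 2 / 2) * exp (-x ^ 2 / 2) = 1 := by
    rw [← exp_add, ← exp_zero]
    ring_nf
  have hc : √(2 * π) * (√(2 * π))⁻¹ = 1 := mul_inv_cancel₀ (by positivity)
  linear_combination (1 - stdPhi z) * (√(2 * π) * (√(2 * π))⁻¹) * he + (1 - stdPhi z) * hc

lemma abs_mul_exp_mul_stdPhi_le {x a : ℝ} (hx : |x| ≤ a) :
    |x * exp (x ^ 2 / 2) * stdPhi x| ≤ a * exp (a ^ 2 / 2) := by
  have ha : 0 ≤ a := (abs_nonneg x).trans hx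
  have hsq : x ^ 2 ≤ a ^ 2 := by simpa only [sq_abs] using pow_le_pow_left₀ (abs_nonneg x) hx 2
  rw [abs_mul, abs_mul, abs_of_pos (exp_pos _), abs_of_nonneg (stdPhi_nonneg x),
    ← mul_one (a * exp (a ^ 2 / 2))]
  exact mul_le_mul (by gcongr) (stdPhi_le_one x) (stdPhi_nonneg x) (by positivity)

lemma one_sub_stdPhi_mul_le_exp {z : ℝ} (hz : 0 < z) :
    (1 - stdPhi z) * (√(2 * π) * (z / 2 * exp ((z / 2) ^ 2 / 2))) ≤ exp (-z ^ 2 / 4) / 2 :=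
  calc (1 - stdPhi z) * (√(2 * π) * (z / 2 * exp ((z / 2) ^ 2 / 2)))
      ≤ exp (-z ^ 2 / 2) / (√(2 * π) * z) * (√(2 * π) * (z / 2 * exp ((z / 2) ^ 2 / 2))) := by
        gcongr
        exact one_sub_stdPhi_le_exp_div hz
    _ = exp (-z ^ 2 / 2) * exp ((z / 2) ^ 2 / 2) / 2 := by field_simp
    _ = exp (-(3 * z ^ 2 / 8)) / 2 := by
        rw [← exp_add]
        ring_nf
    _ ≤ exp (-z ^ 2 / 4) / 2 := by gcongr; nlinarith

theorem steinF_deriv_bound_center (z x : ℝ) (hz : 0 < z) (hx : |x| ≤ z / 2) :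
    |deriv (fun y => Real.sqrt (2 * Real.pi) * Real.exp (y ^ 2 / 2) * stdPhi y * (1 - stdPhi z)) x|
      ≤ 2 * Real.exp (-z ^ 2 / 4) := by
  have hC : 0 ≤ 1 - stdPhi z := sub_nonneg.2 (stdPhi_le_one z)
  rw [(hasDerivAt_steinSolution z x).deriv, abs_mul, abs_of_nonneg hC]
  have hmid : |1 + √(2 * π) * (x * exp (x ^ 2 / 2) * stdPhi x)|
      ≤ 1 + √(2 * π) * (z / 2 * exp ((z / 2) ^ 2 / 2)) := by
    refine (abs_add_le _ _).trans ?_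
    rw [abs_one, abs_mul, abs_of_pos (by positivity)]
    gcongr
    exact abs_mul_exp_mul_stdPhi_le hx
  have hfar := one_sub_stdPhi_mul_le_exp hz
  have hnear : 1 - stdPhi z ≤ 3 / 2 * exp (-z ^ 2 / 4) :=
    (one_sub_stdPhi_le_sqrt_two_mul_exp hz.le).trans (by gcongr; exact sqrt_two_lt_three_halves.le)
  calc (1 - stdPhi z) * |1 + √(2 * π) * (x * exp (x ^ 2 / 2) * stdPhi x)|
      ≤ (1 - stdPhi z) * (1 + √(2 * π) * (z / 2 * exp ((z / 2) ^ 2 / 2))) := by gcongr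
    _ ≤ 2 * exp (-z ^ 2 / 4) := by linarith
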